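/- Let k be an algebraically closed field of characteristic zero, and let F ∈ k[[z]] have order at least 2. If A and B of order at least 2 are compositional right factors of F (i.e., F = X ∘ A and F = Y ∘ B for some X, Y in z·k[[z]]), then every φ_A with A ∘ φ_A = A (φ_A of order 1) commutes under composition with every φ_B with B ∘ φ_B = B (φ_B of order 1). -/

import Mathlib

open PowerSeries

/-- Composition (substitution) `comp A B = A ∘ B` of formal power series,
the standard coefficient formula, well-behaved when `B` has zero constant term. -/
noncomputable def comp {k : Type*} [Field k] (A B : PowerSeries k) : PowerSeries k :=
  PowerSeries.mk fun n =>
    ∑ i ∈ Finset.range (n + 1), (PowerSeries.coeff i A) * (PowerSeries.coeff n (B ^ i))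

/-- `iterComp φ j` is the `j`-fold compositional iterate `φ^{∘j}` (with `φ^{∘0} = z`). -/
noncomputable def iterComp {k : Type*} [Field k] (φ : PowerSeries k) : ℕ → PowerSeries k
  | 0 => PowerSeries.X
  | n + 1 => comp φ (iterComp φ n)

/-- Composition of a list of power series: `compList [A₁, …, A_r] = A₁ ∘ ⋯ ∘ A_r`. -/
noncomputable def compList {k : Type*} [Field k] : List (PowerSeries k) → PowerSeries k
  | [] => PowerSeries.X
  | a :: t => comp a (compList t)

/-
If `F = Y ∘ A` with `A(0) = 0`, every `φ` with `A ∘ φ = A` also satisfies `F ∘ φ = F`, so the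
transition groups `G_A` and `G_B` both lie in `G_F`. The group `G_F` is commutative because
`φ ↦ φ'(0)` is an injective homomorphism on it: if `F ∘ ψ₁ = F ∘ ψ₂` where `ψ₁, ψ₂` have the same
linear coefficient `λ ≠ 0`, write `F = f zⁿ⁺¹ + ⋯` and `ψ₂ - ψ₁ = z · d zᵐ + ⋯` with `f, d ≠ 0`;
then the coefficient of `zⁿ⁺¹⁺ᵐ` in `F ∘ ψ₂ - F ∘ ψ₁` is `(n + 1) f λⁿ d`, which is nonzero in
characteristic zero.
-/

open Finset

namespace PowerSeries

variable {R : Type*} [CommRing R]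

lemma order_eq_one_iff {φ : R⟦X⟧} : φ.order = 1 ↔ coeff 1 φ ≠ 0 ∧ constantCoeff φ = 0 := by
  rw [← Nat.cast_one, order_eq_nat]
  simp

lemma coeff_pow_of_lt {B : R⟦X⟧} (hB : constantCoeff B = 0) {n d : ℕ} (h : n < d) :
    coeff n (B ^ d) = 0 :=
  X_pow_dvd_iff.mp (pow_dvd_pow_of_dvd (X_dvd_iff.mpr hB) d) n h

variable {u v D : R⟦X⟧} {m : ℕ}

lemma X_mul_pow_succ_sub_X_mul_pow_succ (hD : v - u = X ^ m * D) (j : ℕ) :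
    (X * v) ^ (j + 1) - (X * u) ^ (j + 1) =
      X ^ (j + 1 + m) * (D * ∑ i ∈ range (j + 1), v ^ i * u ^ (j - i)) := by
  rw [mul_pow, mul_pow, ← mul_sub, ← geom_sum₂_mul, hD, add_tsub_cancel_right]
  ring

lemma coeff_X_mul_pow_succ_sub_of_lt (hD : v - u = X ^ m * D) {N j : ℕ} (h : N < j + 1 + m) :
    coeff N ((X * v) ^ (j + 1) - (X * u) ^ (j + 1)) = 0 := by
  rw [X_mul_pow_succ_sub_X_mul_pow_succ hD, coeff_X_pow_mul', if_neg (by omega)]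

lemma coeff_X_mul_pow_succ_sub (hD : v - u = X ^ m * D)
    (huv : constantCoeff u = constantCoeff v) (j : ℕ) :
    coeff (j + 1 + m) ((X * v) ^ (j + 1) - (X * u) ^ (j + 1)) =
      constantCoeff D * ((j + 1) * constantCoeff u ^ j) := by
  rw [X_mul_pow_succ_sub_X_mul_pow_succ hD, coeff_X_pow_mul', if_pos le_rfl, Nat.sub_self,
    coeff_zero_eq_constantCoeff_apply, map_mul, map_sum]
  congr 1
  calc ∑ i ∈ range (j + 1), constantCoeff (v ^ i * u ^ (j - i))
      = ∑ _i ∈ range (j + 1), constantCoeff u ^ j := by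
        refine sum_congr rfl fun i hi => ?_
        rw [map_mul, map_pow, map_pow, ← huv, ← pow_add, Nat.add_sub_cancel' (by simp_all)]
    _ = (j + 1) * constantCoeff u ^ j := by simp

end PowerSeries

section Field

variable {k : Type*} [Field k]

lemma coeff_comp (A B : k⟦X⟧) (n : ℕ) :
    coeff n (comp A B) = ∑ i ∈ range (n + 1), coeff i A * coeff n (B ^ i) :=
  coeff_mk _ _

lemma constantCoeff_comp (A B : k⟦X⟧) : constantCoeff (comp A B) = constantCoeff A := by
  rw [← coeff_zero_eq_constantCoeff_apply, ← coeff_zero_eq_constantCoeff_apply, coeff_comp]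
  simp

lemma coeff_one_comp (A B : k⟦X⟧) : coeff 1 (comp A B) = coeff 1 A * coeff 1 B := by
  simp [coeff_comp, sum_range_succ, coeff_one]

lemma comp_eq_subst {B : k⟦X⟧} (hB : constantCoeff B = 0) (A : k⟦X⟧) : comp A B = A.subst B := by
  ext n
  rw [coeff_comp, coeff_subst' (HasSubst.of_constantCoeff_zero' hB),
    finsum_eq_sum_of_support_subset _ (s := range (n + 1))]
  · rfl
  · intro d hd
    rw [coe_range, Set.mem_Iio, Nat.lt_succ_iff]
    by_contra! h
    exact hd (by simp only [coeff_pow_of_lt hB h, smul_zero])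

lemma comp_assoc (f : k⟦X⟧) {g h : k⟦X⟧} (hg : constantCoeff g = 0) (hh : constantCoeff h = 0) :
    comp (comp f g) h = comp f (comp g h) := by
  have hgh : constantCoeff (comp g h) = 0 := (constantCoeff_comp g h).trans hg
  rw [comp_eq_subst hgh, comp_eq_subst hh, comp_eq_subst hh, comp_eq_subst hg,
    subst_comp_subst_apply (HasSubst.of_constantCoeff_zero' hg)
      (HasSubst.of_constantCoeff_zero' hh)]

lemma coeff_comp_X_mul_sub_comp_X_mul {P u v D : k⟦X⟧} {n m : ℕ}
    (hP : ∀ i < n + 1, coeff i P = 0) (hD : v - u = X ^ m * D)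
    (huv : constantCoeff u = constantCoeff v) :
    coeff (n + 1 + m) (comp P (X * v) - comp P (X * u)) =
      coeff (n + 1) P * (constantCoeff D * ((n + 1) * constantCoeff u ^ n)) := by
  rw [map_sub, coeff_comp, coeff_comp, ← sum_sub_distrib]
  simp_rw [← mul_sub, ← map_sub]
  rw [sum_eq_single_of_mem (n + 1) (mem_range.mpr (by omega)), coeff_X_mul_pow_succ_sub hD huv]
  intro j _ hjn
  rcases lt_or_gt_of_ne hjn with h | h
  · rw [hP j h, zero_mul]
  · obtain ⟨j, rfl⟩ : ∃ j', j = j' + 1 := ⟨j - 1, by omega⟩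
    rw [coeff_X_mul_pow_succ_sub_of_lt hD (by omega), mul_zero]

theorem eq_of_comp_eq_comp [CharZero k] {P ψ₁ ψ₂ : k⟦X⟧} (hP : P ≠ 0)
    (hP0 : constantCoeff P = 0) (h₁ : constantCoeff ψ₁ = 0) (h₂ : constantCoeff ψ₂ = 0)
    (hl : coeff 1 ψ₁ = coeff 1 ψ₂) (hl0 : coeff 1 ψ₁ ≠ 0) (hc : comp P ψ₁ = comp P ψ₂) :
    ψ₁ = ψ₂ := by
  obtain ⟨u, rfl⟩ := X_dvd_iff.mpr h₁
  obtain ⟨v, rfl⟩ := X_dvd_iff.mpr h₂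
  simp only [coeff_succ_X_mul, coeff_zero_eq_constantCoeff_apply] at hl hl0
  by_contra hne
  have hvu : v - u ≠ 0 := sub_ne_zero.mpr fun h => hne (h ▸ rfl)
  obtain ⟨n, hn⟩ : ∃ n, P.order.toNat = n + 1 :=
    Nat.exists_eq_succ_of_ne_zero fun h =>
      coeff_order hP (by rw [h, coeff_zero_eq_constantCoeff_apply, hP0])
  have key := coeff_comp_X_mul_sub_comp_X_mul (fun i hi => coeff_of_lt_order_toNat i (hn ▸ hi))
    X_pow_order_mul_divXPowOrder.symm hl
  rw [hc, sub_self, map_zero, eq_comm] at key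
  refine mul_ne_zero (hn ▸ coeff_order hP) (mul_ne_zero ?_ (mul_ne_zero ?_ (pow_ne_zero n hl0))) key
  · exact constantCoeff_divXPowOrder_eq_zero_iff.not.mpr hvu
  · exact_mod_cast n.succ_ne_zero

def transitionGroup (P : k⟦X⟧) : Set k⟦X⟧ := {φ | φ.order = 1 ∧ comp P φ = P}

variable {P φ ψ : k⟦X⟧}

lemma comp_mem_transitionGroup (hφ : φ ∈ transitionGroup P) (hψ : ψ ∈ transitionGroup P) :
    comp φ ψ ∈ transitionGroup P := by
  obtain ⟨hφ1, hφ0⟩ := order_eq_one_iff.mp hφ.1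
  obtain ⟨hψ1, hψ0⟩ := order_eq_one_iff.mp hψ.1
  refine ⟨order_eq_one_iff.mpr ⟨?_, ?_⟩, ?_⟩
  · rw [coeff_one_comp]
    exact mul_ne_zero hφ1 hψ1
  · rw [constantCoeff_comp, hφ0]
  · rw [← comp_assoc P hφ0 hψ0, hφ.2, hψ.2]

lemma transitionGroup_subset_transitionGroup_comp {A : k⟦X⟧} (hA : constantCoeff A = 0)
    (Y : k⟦X⟧) : transitionGroup A ⊆ transitionGroup (comp Y A) := fun φ hφ =>
  ⟨hφ.1, by rw [comp_assoc Y hA (order_eq_one_iff.mp hφ.1).2, hφ.2]⟩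

theorem comp_comm_of_mem_transitionGroup [CharZero k] (hP : P ≠ 0) (hP0 : constantCoeff P = 0)
    (hφ : φ ∈ transitionGroup P) (hψ : ψ ∈ transitionGroup P) : comp φ ψ = comp ψ φ := by
  obtain ⟨hφ1, hφ0⟩ := order_eq_one_iff.mp hφ.1
  obtain ⟨hψ1, hψ0⟩ := order_eq_one_iff.mp hψ.1
  refine eq_of_comp_eq_comp hP hP0 ?_ ?_ ?_ ?_ ?_
  · rw [constantCoeff_comp, hφ0]
  · rw [constantCoeff_comp, hψ0]
  · rw [coeff_one_comp, coeff_one_comp, mul_comm]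
  · rw [coeff_one_comp]
    exact mul_ne_zero hφ1 hψ1
  · rw [(comp_mem_transitionGroup hφ hψ).2, (comp_mem_transitionGroup hψ hφ).2]

end Field

theorem stmt12_general {k : Type*} [Field k] [CharZero k]
    (F A B : PowerSeries k)
    (hF : F ≠ 0) (hA2 : 2 ≤ A.order)
    (hB2 : 2 ≤ B.order)
    (hFA : ∃ Xs : PowerSeries k, constantCoeff Xs = 0 ∧ F = comp Xs A)
    (hFB : ∃ Ys : PowerSeries k, constantCoeff Ys = 0 ∧ F = comp Ys B)
    (φA φB : PowerSeries k) (hφA : φA.order = 1) (hφA2 : comp A φA = A)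
    (hφB : φB.order = 1) (hφB2 : comp B φB = B) :
    comp φA φB = comp φB φA := by
  obtain ⟨Xs, hXs0, rfl⟩ := hFA
  obtain ⟨Ys, -, hYs⟩ := hFB
  have hA0 : constantCoeff A = 0 := one_le_order_iff_constCoeff_eq_zero.mp (le_trans one_le_two hA2)
  have hB0 : constantCoeff B = 0 := one_le_order_iff_constCoeff_eq_zero.mp (le_trans one_le_two hB2)
  refine comp_comm_of_mem_transitionGroup hF (by rw [constantCoeff_comp, hXs0])
    (transitionGroup_subset_transitionGroup_comp hA0 Xs ⟨hφA, hφA2⟩) ?_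
  rw [hYs]
  exact transitionGroup_subset_transitionGroup_comp hB0 Ys ⟨hφB, hφB2⟩

theorem stmt12 {k : Type*} [Field k] [IsAlgClosed k] [CharZero k]
    (F A B : PowerSeries k)
    (hF : F ≠ 0) (hF2 : 2 ≤ F.order) (hA : A ≠ 0) (hA2 : 2 ≤ A.order)
    (hB : B ≠ 0) (hB2 : 2 ≤ B.order)
    (hFA : ∃ Xs : PowerSeries k, constantCoeff Xs = 0 ∧ F = comp Xs A)
    (hFB : ∃ Ys : PowerSeries k, constantCoeff Ys = 0 ∧ F = comp Ys B)
    (φA φB : PowerSeries k) (hφA : φA.order = 1) (hφA2 : comp A φA = A)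
    (hφB : φB.order = 1) (hφB2 : comp B φB = B) :
    comp φA φB = comp φB φA :=
  stmt12_general F A B hF hA2 hB2 hFA hFB φA φB hφA hφA2 hφB hφB2
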